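/- arXiv:1603.06357 — 5 statements merged into one kernel-verified Lean document; each statement's English description precedes it below -/
import Mathlib

section
/- For every integer m ≥ 1, one has a₆(3m) = (−1)^m · r(3m), i.e. ∑_{d | 3m, d odd, d > 0} ξ(6m/d − d) = (−1)^m · r(3m). -/
/-- `ξ m` for odd `m`, determined by the residue of `m` modulo 12. -/
def xi (m : ℤ) : ℤ :=
  if m % 12 = 1 ∨ m % 12 = 5 then -1
  else if m % 12 = 3 then -2
  else if m % 12 = 7 ∨ m % 12 = 11 then 1
  else if m % 12 = 9 then 2
  else 0

/-- `a₆ n = ∑ ξ(2n/d − d)` over odd positive divisors `d` of `n`. -/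
def a6 (n : ℕ) : ℤ :=
  ∑ d ∈ n.divisors.filter (fun d => Odd d), xi (2 * ((n : ℤ) / (d : ℤ)) - (d : ℤ))

/-- `r n` is the number of representations of `n` as a sum of two squares of integers. -/
noncomputable def r (n : ℕ) : ℕ := Set.ncard {p : ℤ × ℤ | p.1 ^ 2 + p.2 ^ 2 = (n : ℤ)}

/-!
Writing `k = 3m/d`, for odd `d` with `3 ∣ d k` one checks modulo 12 that
`ξ(2k - d) = (-1)^k χ₄(d)`, times `-2` when `3 ∣ d` and `3 ∣ k` (i.e. `3 ∣ d ∣ m`).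
Since `χ₄(3) = -1`, the divisors `d ∣ m` with `3 ∣ d` contribute `-∑_{d ∣ 3m} χ₄(d)`, so
`a₆(3m) = 4 (-1)^m ∑_{d ∣ 3m} χ₄(d)`, and Jacobi's two-square theorem `r(n) = 4 ∑_{d ∣ n} χ₄(d)`
concludes. Jacobi's theorem follows by induction on `n`, since for every prime `p` both sides
satisfy `F(pk) = (1 + χ₄(p)) F(k) - χ₄(p) F(k/p)`, the last term only when `p ∣ k`. For `r` this
is read off the factorisation of `p` in `ℤ[i]`: `p ≡ 3 (mod 4)` stays prime, `2 = -i (1 + i)²`,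
and `p ≡ 1 (mod 4)` splits as `π π̄` with `π`, `π̄` not associated, so the Gaussian integers of
norm `pk` are the multiples of `π` or of `π̄` by those of norm `k`, and the common ones are the
multiples of `p`.
-/

open ZMod Finset

local notation "ℤ[i]" => GaussianInt

namespace Nat

lemma filter_not_dvd_divisors_prime_mul {p : ℕ} (hp : p.Prime) (k : ℕ) :
    {d ∈ (p * k).divisors | ¬p ∣ d} = {d ∈ k.divisors | ¬p ∣ d} := by
  ext d
  simp only [mem_filter, mem_divisors, mul_ne_zero_iff, hp.ne_zero, ne_eq, not_false_eq_true,
    true_and, and_congr_left_iff]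
  exact fun hpd _ => (hp.coprime_iff_not_dvd.2 hpd).symm.dvd_mul_left

lemma sum_divisors_filter_dvd {R : Type*} [AddCommMonoid R] (f : ℕ → R) {p n : ℕ} (hpn : p ∣ n)
    (hn : n ≠ 0) :
    ∑ d ∈ n.divisors with p ∣ d, f d = ∑ e ∈ (n / p).divisors, f (p * e) := by
  have hp : 0 < p := pos_of_dvd_of_pos hpn (pos_of_ne_zero hn)
  rw [← sum_image fun a _ b _ h => Nat.eq_of_mul_eq_mul_left hp h]
  congr 1
  ext d
  simp only [mem_filter, mem_divisors, mem_image, Nat.dvd_div_iff_mul_dvd hpn]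
  constructor
  · rintro ⟨⟨hdn, -⟩, e, rfl⟩
    exact ⟨e, ⟨hdn, Nat.div_ne_zero_iff_of_dvd hpn |>.2 ⟨hn, hp.ne'⟩⟩, rfl⟩
  · rintro ⟨e, ⟨hen, -⟩, rfl⟩
    exact ⟨⟨hen, hn⟩, dvd_mul_right p e⟩

lemma sum_divisors_prime_mul {R : Type*} [AddCommGroup R] (f : ℕ → R) {p k : ℕ} (hp : p.Prime)
    (hk : k ≠ 0) :
    ∑ d ∈ (p * k).divisors, f d = ∑ d ∈ k.divisors, f d + ∑ d ∈ k.divisors, f (p * d)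
      - if p ∣ k then ∑ d ∈ (k / p).divisors, f (p * d) else 0 := by
  rw [← sum_filter_add_sum_filter_not (p * k).divisors (p ∣ ·),
    ← sum_filter_add_sum_filter_not k.divisors (p ∣ ·), filter_not_dvd_divisors_prime_mul hp,
    sum_divisors_filter_dvd f (dvd_mul_right p k) (mul_ne_zero hp.ne_zero hk),
    Nat.mul_div_cancel_left k hp.pos]
  split_ifs with hpk
  · rw [sum_divisors_filter_dvd f hpk hk]
    abel
  · rw [filter_false_of_mem (p := (p ∣ ·)) fun d hd hpd =>
      hpk (hpd.trans (dvd_of_mem_divisors hd))]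
    simp only [sum_empty, sub_zero]
    abel

end Nat

lemma sum_divisors_χ₄_prime_mul {p k : ℕ} (hp : p.Prime) (hk : k ≠ 0) :
    ∑ d ∈ (p * k).divisors, χ₄ d = (1 + χ₄ p) * ∑ d ∈ k.divisors, χ₄ d
      - χ₄ p * if p ∣ k then ∑ d ∈ (k / p).divisors, χ₄ d else 0 := by
  simp_rw [Nat.sum_divisors_prime_mul _ hp hk, Nat.cast_mul, map_mul, ← mul_sum]
  split_ifs <;> ring

namespace Zsqrtd

instance {d : ℤ} : IsLocalHom (normMonoidHom (d := d)) :=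
  ⟨fun z hz => (isUnit_iff_norm_isUnit z).2 hz⟩

lemma irreducible_of_prime_norm {d : ℤ} {z : ℤ√d} (h : Prime z.norm) : Irreducible z :=
  Irreducible.of_map (f := normMonoidHom) h.irreducible

end Zsqrtd

namespace GaussianInt

lemma prime_of_prime_norm {z : ℤ[i]} (h : Prime z.norm) : Prime z :=
  (Zsqrtd.irreducible_of_prime_norm h).prime

lemma dvd_or_star_dvd_of_dvd_norm {π z : ℤ[i]} (hπ : Prime π) (h : π ∣ (z.norm : ℤ[i])) :
    π ∣ z ∨ star π ∣ z := by
  rw [Zsqrtd.norm_eq_mul_conj] at h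
  exact (hπ.dvd_or_dvd h).imp id fun h' => by
    simpa [starRingEnd_apply] using map_dvd (starRingEnd ℤ[i]) h'

def normFiber (n : ℤ) : Set ℤ[i] := {z | z.norm = n}

lemma r_eq_ncard_normFiber (n : ℕ) : r n = (normFiber n).ncard := by
  let e : ℤ × ℤ ≃ ℤ[i] :=
    ⟨fun p => ⟨p.1, p.2⟩, fun z => (z.re, z.im), fun _ => rfl, fun _ => rfl⟩
  rw [r, ← Set.ncard_image_of_injective _ e.injective, e.image_eq_preimage_symm]
  congr 1
  ext z
  simp only [normFiber, Set.mem_preimage, Set.mem_ofPred_eq, Zsqrtd.norm_def]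
  ring_nf
  rfl

lemma finite_normFiber (n : ℤ) : (normFiber n).Finite := by
  refine (((Set.finite_Icc (-n) n).prod (Set.finite_Icc (-n) n)).image
    fun p : ℤ × ℤ => (⟨p.1, p.2⟩ : ℤ[i])).subset fun z hz => ⟨(z.re, z.im), ?_, rfl⟩
  simp only [normFiber, Set.mem_ofPred_eq, Zsqrtd.norm_def] at hz
  simp only [Set.mem_prod, Set.mem_Icc]
  refine ⟨⟨?_, ?_⟩, ?_, ?_⟩ <;>
    nlinarith [Int.le_self_sq z.re, Int.le_self_sq z.im, Int.le_self_sq (-z.re),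
      Int.le_self_sq (-z.im), sq_nonneg z.re, sq_nonneg z.im]

lemma image_mul_normFiber {c : ℤ[i]} (hc : c ≠ 0) (k : ℤ) :
    (c * ·) '' normFiber k = {z ∈ normFiber (c.norm * k) | c ∣ z} := by
  ext z
  constructor
  · rintro ⟨w, hw, rfl⟩
    exact ⟨by rw [normFiber, Set.mem_ofPred_eq, Zsqrtd.norm_mul, hw.out], dvd_mul_right c w⟩
  · rintro ⟨hz, w, rfl⟩
    rw [normFiber, Set.mem_ofPred_eq, Zsqrtd.norm_mul] at hz
    exact ⟨w, mul_left_cancel₀ (norm_pos.2 hc).ne' hz, rfl⟩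

lemma ncard_normFiber_dvd {c : ℤ[i]} (hc : c ≠ 0) (k : ℤ) :
    {z ∈ normFiber (c.norm * k) | c ∣ z}.ncard = (normFiber k).ncard := by
  rw [← image_mul_normFiber hc, Set.ncard_image_of_injective _ (mul_right_injective₀ hc)]

lemma ncard_normFiber_natCast_dvd {p : ℕ} (hp : p ≠ 0) (k : ℕ) :
    {z ∈ normFiber (p * k) | (p : ℤ[i]) ∣ z}.ncard = if p ∣ k then r (k / p) else 0 := by
  split_ifs with hpk
  · obtain ⟨k', rfl⟩ := hpk
    rw [Nat.mul_div_cancel_left k' (Nat.pos_of_ne_zero hp), r_eq_ncard_normFiber,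
      ← ncard_normFiber_dvd (Nat.cast_ne_zero.2 hp), Zsqrtd.norm_natCast]
    push_cast
    ring_nf
  · rw [Set.ncard_eq_zero (finite_normFiber _ |>.subset fun z hz => hz.1)]
    refine Set.eq_empty_iff_forall_notMem.2 fun z ⟨hz, w, hw⟩ => hpk ?_
    rw [normFiber, Set.mem_ofPred_eq, hw, Zsqrtd.norm_mul, Zsqrtd.norm_natCast,
      mul_assoc] at hz
    exact_mod_cast Dvd.intro _ (mul_left_cancel₀ (by exact_mod_cast hp) hz)

lemma r_prime_mul_of_mod_four_eq_three {p : ℕ} (hp : p.Prime) (hp3 : p % 4 = 3) (k : ℕ) :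
    r (p * k) = if p ∣ k then r (k / p) else 0 := by
  have : Fact p.Prime := ⟨hp⟩
  rw [← ncard_normFiber_natCast_dvd hp.ne_zero, r_eq_ncard_normFiber]
  congr 1
  ext z
  refine (iff_self_and.2 fun hz => ?_).trans (by push_cast; rfl)
  have hdvd : (p : ℤ[i]) ∣ (z.norm : ℤ[i]) := by
    rw [hz.out]
    exact_mod_cast dvd_mul_right p k
  simpa using dvd_or_star_dvd_of_dvd_norm (prime_of_nat_prime_of_mod_four_eq_three p hp3) hdvd

lemma ncard_normFiber_norm_mul {π : ℤ[i]} (hπ : Prime π) (k : ℕ) :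
    (normFiber (π.norm * k)).ncard + {z ∈ normFiber (π.norm * k) | π ∣ z ∧ star π ∣ z}.ncard
      = 2 * r k := by
  set A := {z ∈ normFiber (π.norm * k) | π ∣ z}
  set B := {z ∈ normFiber (π.norm * k) | star π ∣ z}
  have hunion : normFiber (π.norm * k) = A ∪ B := by
    ext z
    simp only [A, B, Set.mem_union, Set.mem_ofPred_eq, ← and_or_left, iff_self_and]
    intro hz
    apply dvd_or_star_dvd_of_dvd_norm hπ
    rw [hz.out, Int.cast_mul, Zsqrtd.norm_eq_mul_conj]
    exact (dvd_mul_right π _).mul_right _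
  have hB : B.ncard = r k := by
    rw [r_eq_ncard_normFiber, ← ncard_normFiber_dvd (star_ne_zero.2 hπ.ne_zero),
      Zsqrtd.norm_conj]
  have hinter : {z ∈ normFiber (π.norm * k) | π ∣ z ∧ star π ∣ z} = A ∩ B := Set.sep_and
  have hfin {P : ℤ[i] → Prop} : {z ∈ normFiber (π.norm * k) | P z}.Finite :=
    (finite_normFiber _).subset fun _ hz => hz.1
  rw [hinter, hunion, Set.ncard_union_add_ncard_inter _ _ hfin hfin, hB,
    ncard_normFiber_dvd hπ.ne_zero, r_eq_ncard_normFiber, two_mul]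

lemma r_two_mul (k : ℕ) : r (2 * k) = r k := by
  let π : ℤ[i] := ⟨1, 1⟩
  have hnorm : π.norm = 2 := rfl
  have hπ : Prime π := prime_of_prime_norm (hnorm ▸ Int.prime_two)
  have hassoc : Associated π (star π) := ⟨⟨⟨0, -1⟩, ⟨0, 1⟩, rfl, rfl⟩, rfl⟩
  have := ncard_normFiber_norm_mul hπ k
  simp_rw [← hassoc.dvd_iff_dvd_left, and_self, ncard_normFiber_dvd hπ.ne_zero, hnorm,
    ← r_eq_ncard_normFiber] at this
  rw [r_eq_ncard_normFiber]
  push_cast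
  omega

lemma not_star_dvd_self {π : ℤ[i]} {p : ℕ} (hp : p.Prime) (hp2 : p ≠ 2) (hπ : π.norm = p) :
    ¬star π ∣ π := by
  intro h
  have hpZ : Prime (p : ℤ) := Nat.prime_iff_prime_int.1 hp
  -- `star π` divides `2 re π = star π + π` and `2 im π = i (star π - π)`, hence `p ∣ re π, im π`
  -- and then `p² ∣ N π = p`.
  have hdvd : ∀ x : ℤ, star π ∣ ((2 * x : ℤ) : ℤ[i]) → (p : ℤ) ∣ x := by
    intro x hx
    obtain ⟨c, hc⟩ := hx
    have hnorm : (p : ℤ) ∣ 2 * x * (2 * x) :=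
      ⟨c.norm, by rw [← Zsqrtd.norm_intCast, hc, Zsqrtd.norm_mul, Zsqrtd.norm_conj, hπ]⟩
    rcases hpZ.dvd_or_dvd hnorm with h2x | h2x <;>
    rcases hpZ.dvd_or_dvd h2x with h2 | hx' <;> try exact hx'
    all_goals
      exact absurd ((Nat.prime_dvd_prime_iff_eq hp Nat.prime_two).1 (by exact_mod_cast h2)) hp2
  obtain ⟨a, ha⟩ := hdvd π.re (by
    rw [show ((2 * π.re : ℤ) : ℤ[i]) = star π + π by ext <;> simp; ring]
    exact dvd_add dvd_rfl h)
  obtain ⟨b, hb⟩ := hdvd π.im (by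
    rw [show ((2 * π.im : ℤ) : ℤ[i]) = ⟨0, 1⟩ * (star π - π) by ext <;> simp; ring]
    exact (dvd_sub dvd_rfl h).mul_left _)
  have : (p : ℤ) * (p * (a * a + b * b)) = p * 1 := by
    have hnorm : π.norm = p * (p * (a * a + b * b)) := by
      rw [Zsqrtd.norm_def, ha, hb]
      ring
    rw [mul_one, ← hnorm, hπ]
  exact hpZ.not_isUnit (.of_mul_eq_one _ (mul_left_cancel₀ hpZ.ne_zero this))

lemma r_prime_mul_of_mod_four_eq_one {p : ℕ} (hp : p.Prime) (hp1 : p % 4 = 1) (k : ℕ) :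
    r (p * k) + (if p ∣ k then r (k / p) else 0) = 2 * r k := by
  have : Fact p.Prime := ⟨hp⟩
  obtain ⟨a, b, hab⟩ := Nat.Prime.sq_add_sq (p := p) (by omega)
  let π : ℤ[i] := ⟨a, b⟩
  have hnorm : π.norm = p := by
    rw [Zsqrtd.norm_def, ← hab]
    push_cast
    ring
  have hπ : Prime π := prime_of_prime_norm (hnorm ▸ Nat.prime_iff_prime_int.1 hp)
  have hπ' : Prime (star π) :=
    prime_of_prime_norm (by rwa [Zsqrtd.norm_conj, hnorm, ← Nat.prime_iff_prime_int])
  have hp_eq : (p : ℤ[i]) = π * star π := by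
    rw [← Zsqrtd.norm_eq_mul_conj, hnorm, Int.cast_natCast]
  have hboth : ∀ z, π ∣ z ∧ star π ∣ z ↔ (p : ℤ[i]) ∣ z := by
    intro z
    rw [hp_eq]
    refine ⟨fun ⟨⟨w, hw⟩, h⟩ => ?_,
      fun h => ⟨(dvd_mul_right _ _).trans h, (dvd_mul_left _ _).trans h⟩⟩
    subst hw
    exact mul_dvd_mul_left π
      ((hπ'.dvd_or_dvd h).resolve_left (not_star_dvd_self hp (by omega) hnorm))
  have := ncard_normFiber_norm_mul hπ k
  simp_rw [hboth, hnorm] at this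
  rw [← ncard_normFiber_natCast_dvd hp.ne_zero, r_eq_ncard_normFiber, ← this]
  push_cast
  rfl

lemma r_prime_mul {p : ℕ} (hp : p.Prime) (k : ℕ) :
    (r (p * k) : ℤ) = (1 + χ₄ p) * r k - χ₄ p * if p ∣ k then (r (k / p) : ℤ) else 0 := by
  rcases hp.eq_two_or_odd with rfl | hodd
  · rw [r_two_mul]
    simp
  obtain hp1 | hp3 : p % 4 = 1 ∨ p % 4 = 3 := by omega
  · have := r_prime_mul_of_mod_four_eq_one hp hp1 k
    rw [χ₄_nat_one_mod_four hp1]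
    split_ifs at this ⊢ <;> push_cast <;> omega
  · rw [χ₄_nat_three_mod_four hp3, r_prime_mul_of_mod_four_eq_three hp hp3]
    split_ifs <;> push_cast <;> ring

lemma r_one : r 1 = 4 := by
  have h : {p : ℤ × ℤ | p.1 ^ 2 + p.2 ^ 2 = ((1 : ℕ) : ℤ)}
      = ↑({(1, 0), (-1, 0), (0, 1), (0, -1)} : Finset (ℤ × ℤ)) := by
    ext ⟨x, y⟩
    simp only [Set.mem_ofPred_eq, Nat.cast_one, coe_insert, coe_singleton, Set.mem_insert_iff,
      Set.mem_singleton_iff, Prod.mk.injEq]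
    constructor
    · intro h
      have hx1 : x ≤ 1 := by nlinarith [sq_nonneg y]
      have hx2 : -1 ≤ x := by nlinarith [sq_nonneg y]
      have hy1 : y ≤ 1 := by nlinarith [sq_nonneg x]
      have hy2 : -1 ≤ y := by nlinarith [sq_nonneg x]
      interval_cases x <;> interval_cases y <;> simp_all
    · rintro (⟨rfl, rfl⟩ | ⟨rfl, rfl⟩ | ⟨rfl, rfl⟩ | ⟨rfl, rfl⟩) <;> norm_num
  rw [r, h, Set.ncard_coe_finset]
  rfl

theorem r_eq_four_mul_sum_divisors_χ₄ {n : ℕ} (hn : n ≠ 0) :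
    (r n : ℤ) = 4 * ∑ d ∈ n.divisors, χ₄ d := by
  induction n using Nat.strong_induction_on with
  | _ n ih =>
  rcases eq_or_ne n 1 with rfl | hn1
  · simp [r_one]
  set p := n.minFac
  have hp : p.Prime := Nat.minFac_prime hn1
  obtain ⟨k, hk⟩ := n.minFac_dvd
  have hk0 : k ≠ 0 := by rintro rfl; exact hn hk
  have hkn : k < n := hk ▸ lt_mul_left (Nat.pos_of_ne_zero hk0) hp.one_lt
  rw [hk, r_prime_mul hp, sum_divisors_χ₄_prime_mul hp hk0, ih k hkn hk0]
  split_ifs with hpk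
  · rw [ih (k / p) ((Nat.div_le_self k p).trans_lt hkn)
      (Nat.div_ne_zero_iff_of_dvd hpk |>.2 ⟨hk0, hp.ne_zero⟩)]
    ring
  · ring

end GaussianInt

lemma xi_two_mul_sub {d k : ℕ} (hd : Odd d) (h3 : 3 ∣ d ∨ 3 ∣ k) :
    xi (2 * k - d) = (-1) ^ k * χ₄ d * if 3 ∣ k ∧ 3 ∣ d then -2 else 1 := by
  obtain ⟨e, rfl⟩ := hd
  rw [χ₄_nat_eq_if_mod_four]
  rcases Nat.even_or_odd k with hk | hk <;>
    [rw [hk.neg_one_pow]; rw [hk.neg_one_pow]] <;>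
    obtain ⟨j, rfl⟩ := hk <;> unfold xi <;> split_ifs <;> omega

lemma neg_one_pow_odd_mul {a : ℕ} (ha : Odd a) (b : ℕ) : (-1 : ℤ) ^ (a * b) = (-1) ^ b := by
  rw [pow_mul, ha.neg_one_pow]

lemma sum_divisors_filter_three_dvd_χ₄ {m : ℕ} (hm : m ≠ 0) :
    ∑ d ∈ m.divisors with 3 ∣ d, χ₄ d = -∑ d ∈ (3 * m).divisors, χ₄ d := by
  have hm3 := sum_filter_add_sum_filter_not m.divisors (3 ∣ ·) fun d => χ₄ d
  have h3m := sum_filter_add_sum_filter_not (3 * m).divisors (3 ∣ ·) fun d => χ₄ d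
  rw [Nat.filter_not_dvd_divisors_prime_mul Nat.prime_three,
    Nat.sum_divisors_filter_dvd _ (dvd_mul_right 3 m) (by omega),
    Nat.mul_div_cancel_left m (by norm_num)] at h3m
  simp only [Nat.cast_mul, map_mul, ← mul_sum, show χ₄ (3 : ℕ) = -1 from rfl] at h3m
  linarith

lemma a6_three_mul_eq_sum (m : ℕ) :
    a6 (3 * m) = (-1) ^ m * ∑ d ∈ (3 * m).divisors, χ₄ d * if d ∣ m ∧ 3 ∣ d then -2 else 1 := by
  have hodd_of_ne : ∀ d ∈ (3 * m).divisors,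
      (-1) ^ m * (χ₄ d * if d ∣ m ∧ 3 ∣ d then -2 else 1) ≠ 0 → Odd d := by
    intro d _ h
    by_contra hd
    rw [χ₄_nat_eq_if_mod_four, if_pos (Nat.even_iff.1 (Nat.not_odd_iff_even.1 hd)), zero_mul,
      mul_zero] at h
    exact h rfl
  rw [a6, mul_sum, ← sum_filter_of_ne hodd_of_ne]
  refine sum_congr rfl fun d hd => ?_
  obtain ⟨⟨hdvd, -⟩, hodd⟩ := mem_filter.1 hd |>.imp_left Nat.mem_divisors.1
  have hdk : d * (3 * m / d) = 3 * m := Nat.mul_div_cancel' hdvd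
  have h3 : 3 ∣ d ∨ 3 ∣ 3 * m / d :=
    Nat.prime_three.dvd_mul.1 (by rw [hdk]; exact dvd_mul_right 3 m)
  have hsign : (-1 : ℤ) ^ (3 * m / d) = (-1) ^ m := by
    rw [← neg_one_pow_odd_mul hodd, hdk, neg_one_pow_odd_mul (by decide)]
  have hdiv : 3 ∣ 3 * m / d ↔ d ∣ m := by
    rw [Nat.dvd_div_iff_mul_dvd hdvd, mul_comm, Nat.mul_dvd_mul_iff_left (by norm_num)]
  rw [← Int.natCast_div, xi_two_mul_sub hodd h3, hsign, mul_assoc]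
  simp only [hdiv]

theorem a6_three_mul (m : ℕ) (hm : 1 ≤ m) :
    a6 (3 * m) = (-1) ^ m * (r (3 * m) : ℤ) := by
  have hsplit : ∑ d ∈ (3 * m).divisors, χ₄ d * (if d ∣ m ∧ 3 ∣ d then -2 else 1)
      = ∑ d ∈ (3 * m).divisors, χ₄ d - 3 * ∑ d ∈ m.divisors with 3 ∣ d, χ₄ d := by
    rw [← Nat.divisors_filter_dvd_of_dvd (by omega) (dvd_mul_left m 3), filter_filter,
      sum_filter, mul_sum, ← sum_sub_distrib]
    exact sum_congr rfl fun d _ => by split_ifs <;> ring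
  rw [a6_three_mul_eq_sum, hsplit, sum_divisors_filter_three_dvd_χ₄ (by omega),
    GaussianInt.r_eq_four_mul_sum_divisors_χ₄ (by omega)]
  ring
end

section
/- Let n = 3^N · t where N ≥ 1 is odd and t ≥ 1 is not divisible by 3. Then a₆(n) = 0, i.e. ∑_{d | n, d odd, d > 0} ξ(2n/d − d) = 0. -/
/-!
An odd divisor of `3 ^ N * t` is `3 ^ a * e` with `a ≤ N` and `e` an odd divisor of `t`; writing
`t = e * u`, its term is `ξ(m)` with `m = 2·3^(N-a)·u − 3^a·e`. Replacing `a` by `N - a` gives a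
term `ξ(m')` with `m + m' = (3^a + 3^(N-a))(2u − e) ≡ 0 (mod 4)`, because `N` is odd, and with
`3 ∣ m ↔ 3 ∣ m'`. For odd `m, m'` these two congruences force `ξ(m) + ξ(m') = 0`, so for each `e`
the sum over `a` vanishes.
-/

open Finset

theorem Finset.sum_range_eq_zero_of_add_reflect {M : Type*} [AddCommGroup M] [IsAddTorsionFree M]
    {n : ℕ} {g : ℕ → M} (h : ∀ a < n, g a + g (n - 1 - a) = 0) :
    ∑ a ∈ range n, g a = 0 := by
  have h2 : 2 • ∑ a ∈ range n, g a = 0 := by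
    rw [two_nsmul]
    nth_rewrite 2 [← sum_range_reflect]
    rw [← sum_add_distrib]
    exact sum_eq_zero fun a ha => h a (mem_range.1 ha)
  exact (nsmul_eq_zero_iff.1 h2).resolve_right two_ne_zero

theorem Nat.Coprime.sum_filter_odd_divisors_mul {M : Type*} [AddCommMonoid M] {m n : ℕ}
    (hmn : m.Coprime n) (hm : Odd m) (f : ℕ → M) :
    ∑ d ∈ (m * n).divisors.filter Odd, f d
      = ∑ a ∈ m.divisors, ∑ b ∈ n.divisors.filter Odd, f (a * b) := by
  rw [sum_filter, Nat.divisors_mul, Finset.mul_def, sum_image hmn.mul_injOn_divisors, sum_product]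
  refine sum_congr rfl fun a ha => ?_
  have hodd : Odd a := hm.of_dvd_nat (Nat.dvd_of_mem_divisors ha)
  simp only [sum_filter, Nat.odd_mul, hodd, true_and]

theorem xi_add_xi_eq_zero {m m' : ℤ} (hm : Odd m) (hm' : Odd m') (h4 : 4 ∣ m + m')
    (h3 : 3 ∣ m ↔ 3 ∣ m') : xi m + xi m' = 0 := by
  rw [Int.odd_iff] at hm hm'
  rw [Int.dvd_iff_emod_eq_zero, Int.dvd_iff_emod_eq_zero] at h3
  unfold xi; split_ifs <;> omega

theorem four_dvd_three_pow_add_three_pow {a b : ℕ} (hab : Odd (a + b)) :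
    (4 : ℤ) ∣ 3 ^ a + 3 ^ b := by
  refine (ZMod.intCast_zmod_eq_zero_iff_dvd _ 4).1 ?_
  push_cast
  rw [show (3 : ZMod 4) = -1 by decide]
  rcases Nat.even_or_odd a with ha | ha
  · have hb : Odd b := by grind
    rw [ha.neg_one_pow, hb.neg_one_pow]; ring
  · have hb : Even b := by grind
    rw [ha.neg_one_pow, hb.neg_one_pow]; ring

theorem three_dvd_two_mul_mul_sub_mul_iff {x y u e : ℤ} (hu : ¬ 3 ∣ u) (he : ¬ 3 ∣ e)
    (hxy : 3 ∣ x ∨ 3 ∣ y) : 3 ∣ 2 * y * u - x * e ↔ 3 ∣ x ∧ 3 ∣ y := by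
  have hcast (z : ℤ) : 3 ∣ z ↔ (z : ZMod 3) = 0 := by
    simpa using (ZMod.intCast_zmod_eq_zero_iff_dvd z 3).symm
  simp only [hcast] at *
  push_cast
  generalize (x : ZMod 3) = x, (y : ZMod 3) = y, (u : ZMod 3) = u, (e : ZMod 3) = e at *
  revert x y u e
  decide

theorem xi_add_xi_eq_zero_of_odd_add {a b : ℕ} (hab : Odd (a + b)) {e u : ℤ} (he : Odd e)
    (he3 : ¬ 3 ∣ e) (hu3 : ¬ 3 ∣ u) :
    xi (2 * (3 ^ b * u) - 3 ^ a * e) + xi (2 * (3 ^ a * u) - 3 ^ b * e) = 0 := by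
  have hodd (c c' : ℕ) : Odd (2 * (3 ^ c' * u) - 3 ^ c * e) :=
    (even_two_mul _).sub_odd ((Odd.pow (by decide)).mul he)
  have h3pow : 3 ∣ (3 : ℤ) ^ a ∨ 3 ∣ (3 : ℤ) ^ b := by
    rcases Nat.eq_zero_or_pos a with rfl | ha
    · exact .inr (dvd_pow_self 3 (by grind))
    · exact .inl (dvd_pow_self 3 ha.ne')
  refine xi_add_xi_eq_zero (hodd a b) (hodd b a) ?_ ?_
  · rw [show 2 * (3 ^ b * u) - 3 ^ a * e + (2 * (3 ^ a * u) - 3 ^ b * e)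
        = (3 ^ a + 3 ^ b) * (2 * u - e) by ring]
    exact (four_dvd_three_pow_add_three_pow hab).mul_right _
  · rw [← mul_assoc, ← mul_assoc, three_dvd_two_mul_mul_sub_mul_iff hu3 he3 h3pow,
      three_dvd_two_mul_mul_sub_mul_iff hu3 he3 h3pow.symm, and_comm]

theorem three_pow_mul_div_three_pow_mul {N a : ℕ} (ha : a ≤ N) {e : ℕ} (he : e ≠ 0) (u : ℕ) :
    ((3 ^ N * (e * u) : ℕ) : ℤ) / ((3 ^ a * e : ℕ) : ℤ) = 3 ^ (N - a) * u := by
  rw [← Int.natCast_ediv, ← pow_mul_pow_sub 3 ha,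
    show 3 ^ a * 3 ^ (N - a) * (e * u) = 3 ^ a * e * (3 ^ (N - a) * u) by ring,
    Nat.mul_div_cancel_left _ (by positivity)]
  push_cast; rfl

theorem a6_eq_zero_of_odd_three_adic_val_general (N t : ℕ) (hN : Odd N) (h3 : ¬ (3 ∣ t)) :
    a6 (3 ^ N * t) = 0 := by
  have hcop : (3 ^ N).Coprime t := (Nat.prime_three.coprime_iff_not_dvd.2 h3).pow_left N
  rw [a6, hcop.sum_filter_odd_divisors_mul (Odd.pow (by decide)),
    Nat.divisors_prime_pow Nat.prime_three, sum_map, sum_comm]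
  refine sum_eq_zero fun e he => ?_
  obtain ⟨⟨⟨u, rfl⟩, -⟩, he2⟩ := by simpa only [mem_filter, Nat.mem_divisors] using he
  have he3 : ¬ 3 ∣ e := fun h => h3 (h.mul_right u)
  have hu3 : ¬ 3 ∣ u := fun h => h3 (h.mul_left e)
  refine sum_range_eq_zero_of_add_reflect fun a ha => ?_
  replace ha : a ≤ N := Nat.lt_succ_iff.1 ha
  simp only [Nat.add_sub_cancel, Function.Embedding.coeFn_mk]
  rw [three_pow_mul_div_three_pow_mul ha he2.pos.ne',
    three_pow_mul_div_three_pow_mul (N.sub_le a) he2.pos.ne', Nat.sub_sub_self ha]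
  push_cast
  exact xi_add_xi_eq_zero_of_odd_add (by rwa [Nat.add_sub_cancel' ha])
    (by exact_mod_cast he2) (by exact_mod_cast he3) (by exact_mod_cast hu3)

theorem a6_eq_zero_of_odd_three_adic_val (N t : ℕ) (hN : Odd N) (hN1 : 1 ≤ N)
    (ht : 1 ≤ t) (h3 : ¬ (3 ∣ t)) :
    a6 (3 ^ N * t) = 0 :=
  a6_eq_zero_of_odd_three_adic_val_general N t hN h3
end

section
/- For every integer m ≥ 1, one has a′₆(3m) = (−1)^m · r(3m), where a′₆(n) = ∑_{x,y ∈ ℕ, x²+y²=n} a(x)·b(y). -/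
/-- `a 0 = 1` and `a n = 2·(−1)^n` for `n > 0`. -/
def a (n : ℕ) : ℤ := if n = 0 then 1 else 2 * (-1) ^ n

/-- `b 0 = 1`, `b (3m) = 2·(−1)^m` for `m > 0`, and `b n = (−1)^{n−1}` if `3 ∤ n`. -/
def b (n : ℕ) : ℤ :=
  if n = 0 then 1 else if n % 3 = 0 then 2 * (-1) ^ (n / 3) else (-1) ^ (n - 1)

/-- `a′₆ n = ∑ a x · b y`, the sum over all pairs `(x, y)` of non-negative integers
with `x² + y² = n`. -/
def a'6 (n : ℕ) : ℤ :=
  ∑ p ∈ (Finset.range (n + 1) ×ˢ Finset.range (n + 1)).filter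
      (fun p => p.1 ^ 2 + p.2 ^ 2 = n), a p.1 * b p.2

/-- weight: number of integers with a given natAbs. -/
def wn (x : ℕ) : ℕ := if x = 0 then 1 else 2

lemma card_pm (x : ℕ) : ({(x : ℤ), -(x : ℤ)} : Finset ℤ).card = wn x := by
  unfold wn
  rcases eq_or_ne x 0 with h | h
  · subst h; simp
  · rw [if_neg h]
    rw [Finset.card_insert_of_notMem, Finset.card_singleton]
    simp only [Finset.mem_singleton]
    intro hc
    have : (x : ℤ) = 0 := by omega
    exact h (by exact_mod_cast this)

lemma natAbs_sq_eq (q : ℤ) : ((q.natAbs : ℤ)) ^ 2 = q ^ 2 := by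
  rw [← Int.abs_eq_natAbs, sq_abs]

lemma mem_range_of_sq_le {x n : ℕ} (h : x ^ 2 ≤ n) : x < n + 1 := by
  nlinarith

lemma card_reps (n : ℕ) :
    ((Finset.Icc (-(n : ℤ)) n ×ˢ Finset.Icc (-(n : ℤ)) n).filter
        (fun p => p.1 ^ 2 + p.2 ^ 2 = (n : ℤ))).card
      = ∑ p ∈ (Finset.range (n + 1) ×ˢ Finset.range (n + 1)).filter
          (fun p => p.1 ^ 2 + p.2 ^ 2 = n), wn p.1 * wn p.2 := by
  classical
  have hmaps : ∀ q ∈ (Finset.Icc (-(n : ℤ)) n ×ˢ Finset.Icc (-(n : ℤ)) n).filter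
      (fun p => p.1 ^ 2 + p.2 ^ 2 = (n : ℤ)),
      (q.1.natAbs, q.2.natAbs) ∈ (Finset.range (n + 1) ×ˢ Finset.range (n + 1)).filter
        (fun p => p.1 ^ 2 + p.2 ^ 2 = n) := by
    intro q hq
    simp only [Finset.mem_filter, Finset.mem_product, Finset.mem_range] at hq ⊢
    obtain ⟨-, hq2⟩ := hq
    have heq : q.1.natAbs ^ 2 + q.2.natAbs ^ 2 = n := by
      have : ((q.1.natAbs ^ 2 + q.2.natAbs ^ 2 : ℕ) : ℤ) = (n : ℤ) := by
        push_cast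
        rw [sq_abs, sq_abs]; exact hq2
      exact_mod_cast this
    refine ⟨⟨mem_range_of_sq_le ?_, mem_range_of_sq_le ?_⟩, heq⟩ <;> omega
  rw [Finset.card_eq_sum_card_fiberwise hmaps]
  apply Finset.sum_congr rfl
  intro p hp
  simp only [Finset.mem_filter, Finset.mem_product, Finset.mem_range] at hp
  obtain ⟨⟨hp1, hp2⟩, hpe⟩ := hp
  have hfib : ((Finset.Icc (-(n : ℤ)) n ×ˢ Finset.Icc (-(n : ℤ)) n).filter
        (fun p => p.1 ^ 2 + p.2 ^ 2 = (n : ℤ))).filter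
        (fun q => (q.1.natAbs, q.2.natAbs) = p)
      = ({(p.1 : ℤ), -(p.1 : ℤ)} ×ˢ ({(p.2 : ℤ), -(p.2 : ℤ)} : Finset ℤ)) := by
    ext q
    simp only [Finset.mem_filter, Finset.mem_product, Finset.mem_Icc, Finset.mem_insert,
      Finset.mem_singleton, Prod.ext_iff]
    constructor
    · rintro ⟨⟨-, hq2⟩, h1, h2⟩
      constructor
      · rcases Int.natAbs_eq q.1 with h | h
        · left; rw [h, h1]
        · right; rw [← h1]; omega
      · rcases Int.natAbs_eq q.2 with h | h
        · left; rw [h, h2]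
        · right; rw [← h2]; omega
    · rintro ⟨h1, h2⟩
      have habs1 : q.1.natAbs = p.1 := by rcases h1 with h | h <;> simp [h]
      have habs2 : q.2.natAbs = p.2 := by rcases h2 with h | h <;> simp [h]
      have hsq1 : q.1 ^ 2 = (p.1 : ℤ) ^ 2 := by rw [← habs1, natAbs_sq_eq]
      have hsq2 : q.2 ^ 2 = (p.2 : ℤ) ^ 2 := by rw [← habs2, natAbs_sq_eq]
      have heqn : q.1 ^ 2 + q.2 ^ 2 = (n : ℤ) := by
        rw [hsq1, hsq2]; exact_mod_cast hpe
      have hb1 : (p.1 : ℤ) ≤ n := by exact_mod_cast Nat.le_of_lt_succ hp1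
      have hb2 : (p.2 : ℤ) ≤ n := by exact_mod_cast Nat.le_of_lt_succ hp2
      refine ⟨⟨⟨⟨?_, ?_⟩, ?_, ?_⟩, heqn⟩, habs1, habs2⟩ <;>
        rcases h1 with h | h <;> rcases h2 with h' | h' <;> omega
  rw [hfib, Finset.card_product]
  rw [card_pm, card_pm]

lemma r_eq (n : ℕ) :
    (r n : ℤ) = ∑ p ∈ (Finset.range (n + 1) ×ˢ Finset.range (n + 1)).filter
        (fun p => p.1 ^ 2 + p.2 ^ 2 = n), ((wn p.1 * wn p.2 : ℕ) : ℤ) := by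
  classical
  have hset : {p : ℤ × ℤ | p.1 ^ 2 + p.2 ^ 2 = (n : ℤ)}
      = ↑((Finset.Icc (-(n : ℤ)) n ×ˢ Finset.Icc (-(n : ℤ)) n).filter
          (fun p => p.1 ^ 2 + p.2 ^ 2 = (n : ℤ))) := by
    ext q
    simp only [Set.mem_setOf_eq, Finset.coe_filter, Finset.mem_product, Finset.mem_Icc,
      Set.mem_setOf_eq]
    constructor
    · intro h
      have h1 : q.1 ^ 2 ≤ (n : ℤ) := by nlinarith [sq_nonneg q.2]
      have h2 : q.2 ^ 2 ≤ (n : ℤ) := by nlinarith [sq_nonneg q.1]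
      have a1 : |q.1| ≤ (n : ℤ) := by nlinarith [sq_abs q.1, abs_nonneg q.1]
      have a2 : |q.2| ≤ (n : ℤ) := by nlinarith [sq_abs q.2, abs_nonneg q.2]
      rw [abs_le] at a1 a2
      exact ⟨⟨a1, a2⟩, h⟩
    · rintro ⟨-, h⟩; exact h
  rw [r, hset, Set.ncard_coe_finset, card_reps]
  push_cast
  rfl

lemma both_div_three {x y m : ℕ} (h : x ^ 2 + y ^ 2 = 3 * m) : 3 ∣ x ∧ 3 ∣ y := by
  have hz : ((x : ZMod 3)) ^ 2 + (y : ZMod 3) ^ 2 = 0 := by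
    have := congrArg (Nat.cast : ℕ → ZMod 3) h
    push_cast at this
    rw [this]
    simp [show (3 : ZMod 3) = 0 from rfl]
  have key : ∀ u v : ZMod 3, u ^ 2 + v ^ 2 = 0 → u = 0 ∧ v = 0 := by decide
  obtain ⟨h1, h2⟩ := key _ _ hz
  exact ⟨(ZMod.natCast_eq_zero_iff _ _).1 h1,
    (ZMod.natCast_eq_zero_iff _ _).1 h2⟩

lemma neg_one_pow_three_mul (t : ℕ) : ((-1 : ℤ)) ^ (3 * t) = (-1) ^ t := by
  rw [pow_mul]; norm_num

lemma neg_one_pow_sq (t : ℕ) : ((-1 : ℤ)) ^ (t ^ 2) = (-1) ^ t := by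
  rcases Nat.even_or_odd t with he | ho
  · have h2 : Even (t ^ 2) := by rw [sq]; exact he.mul_right t
    rw [he.neg_one_pow, h2.neg_one_pow]
  · rw [ho.neg_one_pow, (ho.pow).neg_one_pow]

lemma term_eq (m x y : ℕ) (h : x ^ 2 + y ^ 2 = 3 * m) :
    a x * b y = (-1) ^ m * ((wn x * wn y : ℕ) : ℤ) := by
  obtain ⟨h3x, h3y⟩ := both_div_three h
  obtain ⟨u, rfl⟩ := h3x
  obtain ⟨v, rfl⟩ := h3y
  have hmval : m = 3 * (u ^ 2 + v ^ 2) := by nlinarith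
  subst hmval
  have hsign : ((-1 : ℤ)) ^ (3 * (u ^ 2 + v ^ 2)) = (-1) ^ u * (-1) ^ v := by
    rw [neg_one_pow_three_mul, pow_add, neg_one_pow_sq, neg_one_pow_sq]
  rw [hsign]
  have ha : a (3 * u) = (-1 : ℤ) ^ u * wn (3 * u) := by
    unfold a wn
    rcases eq_or_ne u 0 with hu | hu
    · subst hu; simp
    · rw [if_neg (by omega), if_neg (by omega), neg_one_pow_three_mul]
      push_cast; ring
  have hb : b (3 * v) = (-1 : ℤ) ^ v * wn (3 * v) := by
    unfold b wn
    rcases eq_or_ne v 0 with hv | hv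
    · subst hv; simp
    · rw [if_neg (by omega), if_pos (by omega), if_neg (by omega),
        Nat.mul_div_cancel_left v (by norm_num)]
      push_cast; ring
  rw [ha, hb]
  have hw : wn (3 * u) = wn u := by
    unfold wn
    rcases eq_or_ne u 0 with h | h
    · simp [h]
    · rw [if_neg (by omega), if_neg h]
  have hw' : wn (3 * v) = wn v := by
    unfold wn
    rcases eq_or_ne v 0 with h | h
    · simp [h]
    · rw [if_neg (by omega), if_neg h]
  rw [hw, hw']
  push_cast
  ring

theorem a'6_three_mul (m : ℕ) (hm : 1 ≤ m) :
    a'6 (3 * m) = (-1) ^ m * (r (3 * m) : ℤ) := by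
  rw [a'6, r_eq, Finset.mul_sum]
  apply Finset.sum_congr rfl
  intro p hp
  simp only [Finset.mem_filter, Finset.mem_product, Finset.mem_range] at hp
  exact term_eq m p.1 p.2 hp.2
end

section
/- For every integer m ≥ 0, one has 4 · a′₆(3m+1) = (−1)^{m+1} · r(3m+1), where a′₆(n) = ∑_{x,y ∈ ℕ, x²+y²=n} a(x)·b(y). -/
/-!
Extend `a` and `b` to even functions `A = evenExt a`, `B = evenExt b` on `ℤ`, doubling
the value at `0`, so that `4 a′₆(n)` becomes the sum of `A u · B v` over all integer
points `(u, v)` on the circle `u² + v² = n`. One checks `A u = 2 (−1)^u` and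
`B v = c(v) (−1)^v` with `c(v) = 2` if `3 ∣ v` and `c(v) = −1` otherwise. For `n = 3m + 1`
exactly one of `u`, `v` is divisible by `3` and `u + v ≡ m + 1 (mod 2)`, so
`A u B v + A v B u = 2 (−1)^(m+1)`. Averaging the sum with its image under
`(u, v) ↦ (v, u)` gives `(−1)^(m+1) r(n)`.
-/

open Finset

noncomputable def circlePoints (n : ℕ) : Finset (ℤ × ℤ) :=
  (Icc (-(n : ℤ)) n ×ˢ Icc (-(n : ℤ)) n).filter fun p => p.1 ^ 2 + p.2 ^ 2 = n

theorem mem_circlePoints {n : ℕ} {p : ℤ × ℤ} :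
    p ∈ circlePoints n ↔ p.1 ^ 2 + p.2 ^ 2 = n := by
  simp only [circlePoints, mem_filter, mem_product, mem_Icc, and_iff_right_iff_imp]
  intro h
  constructor <;> constructor <;>
    nlinarith [sq_nonneg p.1, sq_nonneg p.2, sq_nonneg ((n : ℤ) - 1)]

theorem r_eq_card_circlePoints (n : ℕ) : r n = #(circlePoints n) := by
  rw [r, ← Set.ncard_coe_finset]
  congr
  ext p
  simp [mem_circlePoints]

theorem sum_circlePoints_comp_swap {M : Type*} [AddCommMonoid M] (n : ℕ) (f : ℤ × ℤ → M) :
    ∑ p ∈ circlePoints n, f p.swap = ∑ p ∈ circlePoints n, f p :=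
  sum_nbij' Prod.swap Prod.swap (by simp [mem_circlePoints, add_comm])
    (by simp [mem_circlePoints, add_comm]) (by simp) (by simp) (by simp)

theorem circlePoints_filter_natAbs_eq {n x y : ℕ} (h : x ^ 2 + y ^ 2 = n) :
    (circlePoints n).filter (fun p => (p.1.natAbs, p.2.natAbs) = (x, y))
      = ({(x : ℤ), -(x : ℤ)} : Finset ℤ) ×ˢ ({(y : ℤ), -(y : ℤ)} : Finset ℤ) := by
  ext ⟨u, v⟩
  simp only [mem_filter, mem_circlePoints, mem_product, mem_insert, mem_singleton, Prod.mk.injEq,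
    Int.natAbs_eq_iff]
  constructor
  · exact fun h => h.2
  · rintro ⟨hu, hv⟩
    refine ⟨?_, hu, hv⟩
    rcases hu with rfl | rfl <;> rcases hv with rfl | rfl <;> push_cast [neg_sq, ← h] <;> rfl

section EvenExt

variable {R : Type*} [CommSemiring R]

def evenExt (f : ℕ → R) (u : ℤ) : R := if u = 0 then 2 * f 0 else f u.natAbs

theorem sum_evenExt_pair (f : ℕ → R) (x : ℕ) :
    ∑ u ∈ ({(x : ℤ), -(x : ℤ)} : Finset ℤ), evenExt f u = 2 * f x := by
  rcases Nat.eq_zero_or_pos x with rfl | hx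
  · simp [evenExt]
  · rw [sum_pair (by omega)]
    simp [evenExt, hx.ne']
    ring

theorem four_mul_sum_eq_sum_circlePoints (f g : ℕ → R) (n : ℕ) :
    4 * ∑ p ∈ (range (n + 1) ×ˢ range (n + 1)).filter (fun p => p.1 ^ 2 + p.2 ^ 2 = n),
        f p.1 * g p.2
      = ∑ p ∈ circlePoints n, evenExt f p.1 * evenExt g p.2 := by
  have hmaps : ∀ p ∈ circlePoints n, (p.1.natAbs, p.2.natAbs) ∈
      (range (n + 1) ×ˢ range (n + 1)).filter (fun p => p.1 ^ 2 + p.2 ^ 2 = n) := by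
    intro p hp
    have hsq : p.1.natAbs ^ 2 + p.2.natAbs ^ 2 = n := by
      zify
      simpa only [sq_abs] using mem_circlePoints.mp hp
    simp only [mem_filter, mem_product, mem_range]
    refine ⟨⟨?_, ?_⟩, hsq⟩ <;> nlinarith
  rw [← sum_fiberwise_of_maps_to hmaps, mul_sum]
  refine sum_congr rfl fun q hq => ?_
  rw [circlePoints_filter_natAbs_eq (mem_filter.mp hq).2, sum_product]
  simp only [← mul_sum, ← sum_mul, sum_evenExt_pair]
  ring

end EvenExt

theorem evenExt_a (u : ℤ) : evenExt a u = 2 * (-1) ^ u.natAbs := by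
  by_cases hu : u = 0 <;> simp [evenExt, a, hu]

theorem evenExt_b (v : ℤ) : evenExt b v = (if 3 ∣ v then 2 else -1) * (-1) ^ v.natAbs := by
  by_cases hv : v = 0
  · simp [evenExt, b, hv]
  have hv' : v.natAbs ≠ 0 := by simpa using hv
  simp only [evenExt, b, hv, hv', if_false]
  split_ifs with h3 h3' h3'
  · obtain ⟨k, rfl⟩ := h3'
    rw [Int.natAbs_mul, show (3 : ℤ).natAbs = 3 from rfl, Nat.mul_div_cancel_left _ three_pos,
      pow_mul, Odd.neg_one_pow (by decide : Odd 3)]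
  · omega
  · omega
  · obtain ⟨k, hk⟩ := Nat.exists_eq_succ_of_ne_zero hv'
    rw [hk, Nat.succ_sub_one, pow_succ]
    ring

theorem neg_one_pow_natAbs_mul_neg_one_pow_natAbs {u v : ℤ} {n : ℕ} (h : u ^ 2 + v ^ 2 = n) :
    (-1 : ℤ) ^ u.natAbs * (-1) ^ v.natAbs = (-1) ^ n := by
  have hpar : Even (u.natAbs + v.natAbs) ↔ Even n := by
    rw [Nat.even_add, Int.natAbs_even, Int.natAbs_even, ← Int.even_coe_nat n, ← h, Int.even_add,
      Int.even_pow' two_ne_zero, Int.even_pow' two_ne_zero]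
  rw [← pow_add, neg_one_pow_eq_pow_mod_two, neg_one_pow_eq_pow_mod_two (n := n)]
  simp only [Nat.even_iff] at hpar
  congr 1
  omega

theorem three_dvd_iff_not_three_dvd {u v : ℤ} (h : u ^ 2 + v ^ 2 ≡ 1 [ZMOD 3]) :
    3 ∣ u ↔ ¬ 3 ∣ v := by
  have key : ∀ x y : ZMod 3, x ^ 2 + y ^ 2 = 1 → (x = 0 ↔ ¬ y = 0) := by decide
  have := key u v (by exact_mod_cast (ZMod.intCast_eq_intCast_iff _ _ 3).mpr h)
  rwa [ZMod.intCast_zmod_eq_zero_iff_dvd, ZMod.intCast_zmod_eq_zero_iff_dvd] at this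

theorem evenExt_a_mul_evenExt_b_add_swap {u v : ℤ} {m : ℕ} (h : u ^ 2 + v ^ 2 = 3 * m + 1) :
    evenExt a u * evenExt b v + evenExt a v * evenExt b u = 2 * (-1) ^ (m + 1) := by
  have hsign : (-1 : ℤ) ^ u.natAbs * (-1) ^ v.natAbs = (-1) ^ (m + 1) := by
    rw [neg_one_pow_natAbs_mul_neg_one_pow_natAbs (n := 3 * m + 1) (by push_cast; exact h),
      neg_one_pow_eq_pow_mod_two, neg_one_pow_eq_pow_mod_two (n := m + 1)]
    congr 1
    omega
  have h3 := three_dvd_iff_not_three_dvd (u := u) (v := v) (by rw [h]; simp [Int.ModEq])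
  rw [evenExt_a, evenExt_a, evenExt_b, evenExt_b]
  split_ifs <;> first | tauto | linear_combination 2 * hsign

theorem a'6_three_mul_add_one (m : ℕ) :
    4 * a'6 (3 * m + 1) = (-1) ^ (m + 1) * (r (3 * m + 1) : ℤ) := by
  set w : ℤ × ℤ → ℤ := fun p => evenExt a p.1 * evenExt b p.2
  have hpair : ∀ p ∈ circlePoints (3 * m + 1), w p + w p.swap = 2 * (-1) ^ (m + 1) := by
    intro p hp
    exact evenExt_a_mul_evenExt_b_add_swap (by simpa using mem_circlePoints.mp hp)
  have hsum := sum_congr rfl hpair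
  rw [sum_add_distrib, sum_circlePoints_comp_swap, sum_const, nsmul_eq_mul] at hsum
  rw [a'6, four_mul_sum_eq_sum_circlePoints, r_eq_card_circlePoints]
  linarith
end

section
/- For every integer m ≥ 0, one has 2 · a′₆(3m+2) = (−1)^{m+1} · r(3m+2), where a′₆(n) = ∑_{x,y ∈ ℕ, x²+y²=n} a(x)·b(y). -/
lemma negpow_congr (x y : ℕ) (h : x % 2 = y % 2) : (-1 : ℤ) ^ x = (-1) ^ y := by
  rcases Nat.even_or_odd x with hx | hx
  · rw [hx.neg_one_pow, (Nat.even_iff.mpr (by rw [← h]; exact Nat.even_iff.mp hx)).neg_one_pow]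
  · rw [hx.neg_one_pow, (Nat.odd_iff.mpr (by rw [← h]; exact Nat.odd_iff.mp hx)).neg_one_pow]

lemma sq_mod_two (x : ℕ) : x ^ 2 % 2 = x % 2 := by
  conv_lhs => rw [Nat.pow_mod]
  have h : x % 2 = 0 ∨ x % 2 = 1 := by omega
  rcases h with h | h <;> rw [h]

lemma sq_mod_three (x : ℕ) : x ^ 2 % 3 = 0 ∨ x ^ 2 % 3 = 1 := by
  rw [Nat.pow_mod]
  have h : x % 3 = 0 ∨ x % 3 = 1 ∨ x % 3 = 2 := by omega
  rcases h with h | h | h <;> rw [h] <;> simp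

lemma mod3_ne (x y n : ℕ) (hn : n % 3 = 2) (h : x ^ 2 + y ^ 2 = n) : x % 3 ≠ 0 := by
  intro hx
  have h1 : x ^ 2 % 3 = 0 := by rw [Nat.pow_mod, hx]
  have h2 := sq_mod_three y
  generalize x ^ 2 = A at h1 h
  generalize y ^ 2 = B at h2 h
  omega

/-- the four sign-variants of a nonnegative pair -/
def quad (q : ℕ × ℕ) : Finset (ℤ × ℤ) :=
  {((q.1 : ℤ), (q.2 : ℤ)), (-(q.1 : ℤ), (q.2 : ℤ)),
   ((q.1 : ℤ), -(q.2 : ℤ)), (-(q.1 : ℤ), -(q.2 : ℤ))}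

lemma quad_natAbs {q : ℕ × ℕ} {p : ℤ × ℤ} (h : p ∈ quad q) :
    p.1.natAbs = q.1 ∧ p.2.natAbs = q.2 := by
  obtain ⟨px, py⟩ := p
  simp only [quad, Finset.mem_insert, Finset.mem_singleton, Prod.mk.injEq] at h
  rcases h with ⟨h1, h2⟩ | ⟨h1, h2⟩ | ⟨h1, h2⟩ | ⟨h1, h2⟩ <;> subst h1 <;> subst h2 <;> simp

lemma quad_card {q : ℕ × ℕ} (h1 : q.1 ≠ 0) (h2 : q.2 ≠ 0) : (quad q).card = 4 := by
  rw [quad, Finset.card_insert_of_notMem, Finset.card_insert_of_notMem,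
    Finset.card_insert_of_notMem, Finset.card_singleton] <;>
    simp only [Finset.mem_insert, Finset.mem_singleton, Prod.mk.injEq, not_or] <;> omega

theorem a'6_three_mul_add_two (m : ℕ) :
    2 * a'6 (3 * m + 2) = (-1) ^ (m + 1) * (r (3 * m + 2) : ℤ) := by
  set F := (Finset.range (3 * m + 2 + 1) ×ˢ Finset.range (3 * m + 2 + 1)).filter
      (fun p : ℕ × ℕ => p.1 ^ 2 + p.2 ^ 2 = 3 * m + 2) with hF
  have hnmod : (3 * m + 2) % 3 = 2 := by omega
  have hFmem : ∀ p ∈ F, p.1 % 3 ≠ 0 ∧ p.2 % 3 ≠ 0 ∧ p.1 ^ 2 + p.2 ^ 2 = 3 * m + 2 := by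
    intro p hp
    rw [hF, Finset.mem_filter] at hp
    obtain ⟨-, heq⟩ := hp
    exact ⟨mod3_ne _ _ _ hnmod heq, mod3_ne p.2 p.1 _ hnmod (by linarith), heq⟩
  -- each term of the sum is 2 * (-1)^(m+1)
  have hterm : ∀ p ∈ F, a p.1 * b p.2 = 2 * (-1) ^ (m + 1) := by
    intro p hp
    obtain ⟨hx3, hy3, heq⟩ := hFmem p hp
    have hx0 : p.1 ≠ 0 := by omega
    have hy0 : p.2 ≠ 0 := by omega
    rw [a, b, if_neg hx0, if_neg hy0, if_neg hy3]
    rw [mul_assoc, ← pow_add]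
    have hpar : (p.1 + (p.2 - 1)) % 2 = (m + 1) % 2 := by
      have h1 := sq_mod_two p.1
      have h2 := sq_mod_two p.2
      obtain ⟨A, hA⟩ : ∃ A, p.1 ^ 2 = A := ⟨_, rfl⟩
      obtain ⟨B, hB⟩ : ∃ B, p.2 ^ 2 = B := ⟨_, rfl⟩
      rw [hA] at h1 heq
      rw [hB] at h2 heq
      omega
    rw [negpow_congr _ _ hpar]
  have hsum : a'6 (3 * m + 2) = F.card * (2 * (-1) ^ (m + 1)) := by
    rw [a'6]
    rw [Finset.sum_congr rfl hterm, Finset.sum_const, nsmul_eq_mul]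
  -- counting: r (3m+2) = 4 * F.card
  have hset : {p : ℤ × ℤ | p.1 ^ 2 + p.2 ^ 2 = ((3 * m + 2 : ℕ) : ℤ)} = ↑(F.biUnion quad) := by
    ext p
    simp only [Set.mem_setOf_eq, Finset.coe_biUnion, Set.mem_iUnion, Finset.mem_coe,
      Finset.mem_biUnion]
    constructor
    · intro hpe
      refine ⟨(p.1.natAbs, p.2.natAbs), ?_, ?_⟩
      · have heq : p.1.natAbs ^ 2 + p.2.natAbs ^ 2 = 3 * m + 2 := by
          have h1 : ((p.1.natAbs ^ 2 + p.2.natAbs ^ 2 : ℕ) : ℤ) = ((3 * m + 2 : ℕ) : ℤ) := by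
            push_cast
            rw [sq_abs, sq_abs]
            push_cast at hpe
            linarith
          exact_mod_cast h1
        rw [hF, Finset.mem_filter, Finset.mem_product, Finset.mem_range, Finset.mem_range]
        refine ⟨⟨?_, ?_⟩, heq⟩
        · have : p.1.natAbs ≤ p.1.natAbs ^ 2 := by nlinarith [sq_nonneg (p.1.natAbs - 1)]
          omega
        · have : p.2.natAbs ≤ p.2.natAbs ^ 2 := by nlinarith [sq_nonneg (p.2.natAbs - 1)]
          omega
      · obtain ⟨px, py⟩ := p
        rcases Int.natAbs_eq px with h1 | h1 <;> rcases Int.natAbs_eq py with h2 | h2 <;>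
          simp only [quad, Finset.mem_insert, Finset.mem_singleton, Prod.mk.injEq] <;> tauto
    · rintro ⟨q, hq, hpq⟩
      obtain ⟨-, -, heq⟩ := hFmem q hq
      have hc : ((q.1 : ℤ)) ^ 2 + ((q.2 : ℤ)) ^ 2 = ((3 * m + 2 : ℕ) : ℤ) := by
        exact_mod_cast heq
      obtain ⟨px, py⟩ := p
      simp only [quad, Finset.mem_insert, Finset.mem_singleton, Prod.mk.injEq] at hpq
      rcases hpq with ⟨h1, h2⟩ | ⟨h1, h2⟩ | ⟨h1, h2⟩ | ⟨h1, h2⟩ <;> subst h1 <;> subst h2 <;>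
        simpa using hc
  have hrn : (r (3 * m + 2) : ℤ) = 4 * F.card := by
    have hdisj : ∀ q1 ∈ F, ∀ q2 ∈ F, q1 ≠ q2 → Disjoint (quad q1) (quad q2) := by
      intro q1 _ q2 _ hne
      rw [Finset.disjoint_left]
      intro p h1 h2
      obtain ⟨a1, b1⟩ := quad_natAbs h1
      obtain ⟨a2, b2⟩ := quad_natAbs h2
      exact hne (Prod.ext (by omega) (by omega))
    have hcard : (F.biUnion quad).card = 4 * F.card := by
      rw [Finset.card_biUnion hdisj]
      rw [Finset.sum_congr rfl (fun q hq => ?_), Finset.sum_const, smul_eq_mul, mul_comm]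
      obtain ⟨hx3, hy3, -⟩ := hFmem q hq
      exact quad_card (by omega) (by omega)
    rw [r, hset, Set.ncard_coe_finset, hcard]
    push_cast
    ring
  rw [hsum, hrn]
  ring
end
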